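/- Let A ∈ ℝ^{m×n}, let Θ ∈ ℝ^{n×n} be diagonal with strictly positive diagonal entries, let N ⊆ {1,…,n} with complement B, let A_N be the submatrix of columns of A in N and Θ_N the corresponding principal submatrix of Θ. Let S = A_N Θ_N A_Nᵀ, R = off(S), and let δ_d > 0 satisfy δ_d > Σ_{j≠i} |S_{ij}| for every i ∈ {1,…,m} (so that δ_d I_m + R is positive definite). With K = AΘAᵀ + δ_d I_m, every eigenvalue of the symmetric matrix K^{-1/2} R K^{-1/2} is strictly greater than −1. -/

import Mathlib

/-!
Since `K` is positive definite, `K^{-1/2} (R + K) K^{-1/2} = K^{-1/2} R K^{-1/2} + I`, so it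
suffices that `R + K = (δ_d I + R) + AΘAᵀ` is positive definite. The second summand is positive
semidefinite, and `δ_d I + R` is a symmetric matrix with diagonal `δ_d` dominating its off-diagonal
row sums, hence positive definite by Gershgorin's theorem.
-/

open Matrix

/-- off(B): same off-diagonal entries as B, zero diagonal. -/
def offDiag {ι : Type*} [DecidableEq ι] (B : Matrix ι ι ℝ) : Matrix ι ι ℝ :=
  B - Matrix.diagonal (fun i => B i i)

open scoped ComplexOrder in
/-- The old Mathlib `Matrix.PosSemidef.sqrt` (removed since), with its original definition. -/
noncomputable def posSemidefSqrt {n 𝕜 : Type*} [Fintype n] [DecidableEq n] [RCLike 𝕜]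
    {A : Matrix n n 𝕜} (hA : A.PosSemidef) : Matrix n n 𝕜 :=
  hA.1.eigenvectorUnitary.1 * diagonal ((↑) ∘ Real.sqrt ∘ hA.1.eigenvalues) *
    (star hA.1.eigenvectorUnitary : Matrix n n 𝕜)

open scoped MatrixOrder ComplexOrder

namespace Matrix

variable {n : Type*} [Fintype n]

theorem posSemidefSqrt_eq_cfcSqrt {𝕜 : Type*} [DecidableEq n] [RCLike 𝕜] {A : Matrix n n 𝕜}
    (hA : A.PosSemidef) : posSemidefSqrt hA = CFC.sqrt A := by
  rw [CFC.sqrt_eq_cfc, cfc_nnreal_eq_real _ A, hA.1.cfc_eq]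
  simp only [IsHermitian.cfc, Real.coe_sqrt, Real.coe_toNNReal', posSemidefSqrt,
    Unitary.conjStarAlgAut_apply]
  congr 3
  funext i
  simp [max_eq_left (hA.eigenvalues_nonneg i)]

theorem IsHermitian.posDef_of_sum_abs_lt_diag [DecidableEq n] {M : Matrix n n ℝ}
    (hM : M.IsHermitian) (h : ∀ k, ∑ j ∈ Finset.univ.erase k, |M k j| < M k k) : M.PosDef := by
  refine hM.posDef_iff_eigenvalues_pos.mpr fun i => ?_
  have hμ : Module.End.HasEigenvalue (toLin' M) (hM.eigenvalues i) := by
    rw [Module.End.hasEigenvalue_iff_mem_spectrum, spectrum_toLin']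
    exact hM.eigenvalues_mem_spectrum_real i
  obtain ⟨k, hk⟩ := eigenvalue_mem_ball hμ
  rw [Metric.mem_closedBall, Real.dist_eq] at hk
  simp only [Real.norm_eq_abs] at hk
  linarith [neg_abs_le (hM.eigenvalues i - M k k), h k]

theorem posDef_offDiag_add_smul_one [DecidableEq n] {S : Matrix n n ℝ} (hS : S.IsSymm) {δ : ℝ}
    (h : ∀ i, ∑ j ∈ Finset.univ.erase i, |S i j| < δ) : (offDiag S + δ • 1).PosDef := by
  refine IsHermitian.posDef_of_sum_abs_lt_diag ?_ fun k => ?_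
  · simp only [IsHermitian, conjTranspose_eq_transpose_of_trivial, transpose_add, offDiag,
      transpose_sub, diagonal_transpose, transpose_smul, transpose_one, hS.eq]
  · have hoff : ∀ j ∈ Finset.univ.erase k, |(offDiag S + δ • 1) k j| = |S k j| := fun j hj => by
      simp [offDiag, (Finset.ne_of_mem_erase hj).symm]
    rw [Finset.sum_congr rfl hoff]
    convert h k using 1
    simp [offDiag]

theorem PosDef.pos_of_mulVec_eq_smul {M : Matrix n n ℝ} (hM : M.PosDef) {μ : ℝ} {x : n → ℝ}
    (hx : x ≠ 0) (h : M *ᵥ x = μ • x) : 0 < μ := by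
  have hpos := hM.dotProduct_mulVec_pos hx
  rw [h, dotProduct_smul, smul_eq_mul] at hpos
  exact pos_of_mul_pos_left hpos (dotProduct_star_self_nonneg x)

theorem PosDef.neg_one_lt_of_mulVec_eq_smul [DecidableEq n] {K R : Matrix n n ℝ} (hK : K.PosDef)
    (hRK : (R + K).PosDef) {μ : ℝ} {x : n → ℝ} (hx : x ≠ 0)
    (h : ((CFC.sqrt K)⁻¹ * R * (CFC.sqrt K)⁻¹) *ᵥ x = μ • x) : -1 < μ := by
  have hQ : IsUnit (CFC.sqrt K) := (CFC.isUnit_sqrt_iff K hK.posSemidef.nonneg).mpr hK.isUnit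
  have hQQ : CFC.sqrt K * CFC.sqrt K = K := CFC.sqrt_mul_sqrt_self K hK.posSemidef.nonneg
  have hQ_star : star (CFC.sqrt K) = CFC.sqrt K := (CFC.sqrt_nonneg K).isSelfAdjoint.star_eq
  set Q := CFC.sqrt K
  have hQ_det : IsUnit Q.det := (isUnit_iff_isUnit_det Q).mp hQ
  have hconj : Q⁻¹ * (R + K) * star Q⁻¹ = Q⁻¹ * R * Q⁻¹ + 1 := by
    rw [star_eq_conjTranspose, conjTranspose_nonsing_inv, ← star_eq_conjTranspose, hQ_star,
      mul_add, add_mul, ← hQQ]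
    simp only [Matrix.mul_assoc, mul_nonsing_inv Q hQ_det, Matrix.mul_one]
    simp only [← Matrix.mul_assoc, nonsing_inv_mul Q hQ_det]
  have hPD : (Q⁻¹ * R * Q⁻¹ + 1).PosDef :=
    hconj ▸ (IsUnit.posDef_star_right_conjugate_iff (isUnit_nonsing_inv_iff.mpr hQ)).mpr hRK
  have := hPD.pos_of_mulVec_eq_smul (μ := μ + 1) hx
    (by rw [add_mulVec, h, one_mulVec, add_smul, one_smul])
  linarith

end Matrix

theorem stmt_4_general {m n : ℕ} (A : Matrix (Fin m) (Fin n) ℝ)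
    (d : Fin n → ℝ) (hd : ∀ j, 0 < d j)
    (N : Finset (Fin n))
    (AN : Matrix (Fin m) {j // j ∈ N} ℝ)
    (ThetaN : Matrix {j // j ∈ N} {j // j ∈ N} ℝ)
    (hThetaN : ThetaN = Matrix.diagonal (fun j : {j // j ∈ N} => d j))
    (δd : ℝ)
    (S R K : Matrix (Fin m) (Fin m) ℝ)
    (hS : S = AN * ThetaN * ANᵀ)
    (hR : R = offDiag S)
    (hdom : ∀ i : Fin m, ∑ j ∈ Finset.univ.erase i, |S i j| < δd)
    (hK : K = A * Matrix.diagonal d * Aᵀ + δd • (1 : Matrix (Fin m) (Fin m) ℝ))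
    (hKpd : K.PosDef) :
    ∀ μ : ℝ, ∀ x : Fin m → ℝ, x ≠ 0 →
      ((posSemidefSqrt hKpd.posSemidef)⁻¹ * R * (posSemidefSqrt hKpd.posSemidef)⁻¹).mulVec x = μ • x →
      -1 < μ := by
  intro μ x hx hμ
  have hS_symm : S.IsSymm := by
    rw [hS, hThetaN, IsSymm, transpose_mul, transpose_mul, transpose_transpose,
      diagonal_transpose, Matrix.mul_assoc]
  have hADA : (A * diagonal d * Aᵀ).PosSemidef := by
    simpa using (posSemidef_diagonal_iff.mpr fun j => (hd j).le).mul_mul_conjTranspose_same A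
  have hRK : (R + K).PosDef := by
    have hsplit : R + K = (offDiag S + δd • 1) + A * diagonal d * Aᵀ := by
      rw [hR, hK]; abel
    exact hsplit ▸ (posDef_offDiag_add_smul_one hS_symm hdom).add_posSemidef hADA
  rw [posSemidefSqrt_eq_cfcSqrt] at hμ
  exact hKpd.neg_one_lt_of_mulVec_eq_smul hRK hx hμ

/-- With `Θ` diagonal positive, `N` a set of column indices, `S = A_N Θ_N A_Nᵀ`,
`R = off(S)`, and `δ_d > 0` strictly dominating the off-diagonal row sums of `S`
(so `δ_d I + R` is positive definite), with `K = AΘAᵀ + δ_d I`, every eigenvalue of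
`K^{-1/2} R K^{-1/2}` is strictly greater than −1. -/
theorem stmt_4 {m n : ℕ} (A : Matrix (Fin m) (Fin n) ℝ)
    (d : Fin n → ℝ) (hd : ∀ j, 0 < d j)
    (N : Finset (Fin n))
    (AN : Matrix (Fin m) {j // j ∈ N} ℝ)
    (hAN : AN = A.submatrix id (fun j : {j // j ∈ N} => (j : Fin n)))
    (ThetaN : Matrix {j // j ∈ N} {j // j ∈ N} ℝ)
    (hThetaN : ThetaN = Matrix.diagonal (fun j : {j // j ∈ N} => d j))
    (δd : ℝ) (hδd : 0 < δd)
    (S R K : Matrix (Fin m) (Fin m) ℝ)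
    (hS : S = AN * ThetaN * ANᵀ)
    (hR : R = offDiag S)
    (hdom : ∀ i : Fin m, ∑ j ∈ Finset.univ.erase i, |S i j| < δd)
    (hK : K = A * Matrix.diagonal d * Aᵀ + δd • (1 : Matrix (Fin m) (Fin m) ℝ))
    (hKpd : K.PosDef) :
    ∀ μ : ℝ, ∀ x : Fin m → ℝ, x ≠ 0 →
      ((posSemidefSqrt hKpd.posSemidef)⁻¹ * R * (posSemidefSqrt hKpd.posSemidef)⁻¹).mulVec x = μ • x →
      -1 < μ :=
  stmt_4_general A d hd N AN ThetaN hThetaN δd S R K hS hR hdom hK hKpd
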